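/- Let X be a normal, first countable, arcwise connected Hausdorff topological space and (Y,d) a complete, locally compact length space. Assume f : X → Y is a continuous closed map that is also locally open onto its image, locally fiber connected, and has local convexity data. If c : [a,b] → X_f is a shortest path in (X_f, d̃) (i.e., l_{d̃}(c) = d̃(c(a), c(b))), then f̃ ∘ c is a geodesic in (Y,d) contained in f(X). -/

import Mathlib

open Set Topology Filter

section TopDefs

variable {X Y : Type*} [TopologicalSpace X] [TopologicalSpace Y]

/-- A subset `A ⊆ X` satisfies the (LFC) condition for `f : X → Y` if `A` does not intersect
two different connected components of the fiber `f ⁻¹ {f x}`, for any `x ∈ A`. -/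
def SatisfiesLFC (f : X → Y) (A : Set X) : Prop :=
  ∀ x ∈ A, ∀ y ∈ A, f y = f x → y ∈ connectedComponentIn (f ⁻¹' {f x}) x

/-- `f` is locally fiber connected if every open neighborhood of every point contains a
connected neighborhood satisfying (LFC). -/
def LocallyFiberConnected (f : X → Y) : Prop :=
  ∀ x : X, ∀ V : Set X, IsOpen V → x ∈ V →
    ∃ U ∈ 𝓝 x, U ⊆ V ∧ IsConnected U ∧ SatisfiesLFC f U

/-- An open set `U` satisfies the (LOI) condition for `f` if the restriction
`f|_U : U → f(U)` is an open map (`f(U)` carrying the subspace topology). -/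
def SatisfiesLOI (f : X → Y) (U : Set X) : Prop :=
  IsOpenMap (fun u : U => (⟨f u, Set.mem_image_of_mem f u.2⟩ : f '' U))

/-- `f` is locally open onto its image if every point has an open neighborhood
satisfying (LOI). -/
def LocallyOpenOntoImage (f : X → Y) : Prop :=
  ∀ x : X, ∃ U : Set X, IsOpen U ∧ x ∈ U ∧ SatisfiesLOI f U

/-- The equivalence relation identifying two points iff they lie in the same connected
component of the same fiber of `f`. -/
def fiberSetoid (f : X → Y) : Setoid X where
  r x y := y ∈ connectedComponentIn (f ⁻¹' {f x}) x
  iseqv := by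
    constructor
    · intro x
      exact mem_connectedComponentIn (by simp)
    · intro x y h
      have hfy : f y = f x := by
        have := connectedComponentIn_subset (f ⁻¹' {f x}) x h
        simpa using this
      have h2 : connectedComponentIn (f ⁻¹' {f x}) x = connectedComponentIn (f ⁻¹' {f x}) y :=
        connectedComponentIn_eq h
      show x ∈ connectedComponentIn (f ⁻¹' {f y}) y
      rw [hfy, ← h2]
      exact mem_connectedComponentIn (by simp)
    · intro x y z hxy hyz
      have hfy : f y = f x := by
        have := connectedComponentIn_subset (f ⁻¹' {f x}) x hxy
        simpa using this
      show z ∈ connectedComponentIn (f ⁻¹' {f x}) x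
      have hyz' : z ∈ connectedComponentIn (f ⁻¹' {f x}) y := by
        rw [← hfy]; exact hyz
      rw [connectedComponentIn_eq hxy]
      exact hyz'

/-- The induced map `f̃ : X_f → Y` with `f̃ ∘ π_f = f`. -/
def ftilde (f : X → Y) : Quotient (fiberSetoid f) → Y :=
  Quotient.lift f (fun x y h => by
    have h' : y ∈ connectedComponentIn (f ⁻¹' {f x}) x := h
    have := connectedComponentIn_subset (f ⁻¹' {f x}) x h'
    simp only [mem_preimage, mem_singleton_iff] at this
    exact this.symm)

end TopDefs

section MetricDefs

open scoped ENNReal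

/-- The length of a curve `c` over the parameter set `s`, with respect to an arbitrary
`ℝ≥0∞`-valued distance function `ρ`: the supremum over all partitions of the sums of
consecutive distances. -/
noncomputable def lengthWith {Z : Type*} (ρ : Z → Z → ℝ≥0∞) (c : ℝ → Z) (s : Set ℝ) : ℝ≥0∞ :=
  ⨆ p : ℕ × { u : ℕ → ℝ // Monotone u ∧ ∀ i, u i ∈ s },
    ∑ i ∈ Finset.range p.1, ρ (c (p.2.1 (i + 1))) (c (p.2.1 i))

variable {Y : Type*} [EMetricSpace Y]

/-- The set of lengths of continuous curves contained in `C` joining `x` to `y`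
(the length being computed with respect to the extended distance of `Y`). -/
def pathLengthsIn (C : Set Y) (x y : Y) : Set ℝ≥0∞ :=
  {L | ∃ (a b : ℝ) (c : ℝ → Y), a ≤ b ∧ ContinuousOn c (Set.Icc a b) ∧
      Set.MapsTo c (Set.Icc a b) C ∧ c a = x ∧ c b = y ∧ L = eVariationOn c (Set.Icc a b)}

/-- `(Y, edist)` is a length space: the distance between any two points is the infimum of
the lengths of curves joining them (`∞` if there is no rectifiable such curve). -/
def IsLengthSpace (Y : Type*) [EMetricSpace Y] : Prop :=
  ∀ x y : Y, edist x y = sInf (pathLengthsIn (Set.univ : Set Y) x y)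

/-- A subset `C` of a metric space is convex if the restriction of the distance to `C` is a
finite length metric: distances between points of `C` are finite and realized as the infimum
of lengths of curves contained in `C`. -/
def IsConvexSubset (C : Set Y) : Prop :=
  ∀ x ∈ C, ∀ y ∈ C, edist x y ≠ ⊤ ∧ edist x y = sInf (pathLengthsIn C x y)

/-- A geodesic metric space: a length space in which any two points are joined by a
shortest path. -/
def IsGeodesicSpace (Y : Type*) [EMetricSpace Y] : Prop :=
  IsLengthSpace Y ∧ ∀ x y : Y, ∃ (a b : ℝ) (c : ℝ → Y), a ≤ b ∧
    ContinuousOn c (Set.Icc a b) ∧ c a = x ∧ c b = y ∧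
    eVariationOn c (Set.Icc a b) = edist x y

/-- `c : [a,b] → Y` is a geodesic: it is continuous and each parameter has a neighborhood
(in `[a,b]`) on which the curve is a shortest path. -/
def IsGeodesicCurveOn (c : ℝ → Y) (a b : ℝ) : Prop :=
  a ≤ b ∧ ContinuousOn c (Set.Icc a b) ∧
  ∀ t ∈ Set.Icc a b, ∃ a' b', a' ≤ b' ∧ t ∈ Set.Icc a' b' ∧ Set.Icc a' b' ⊆ Set.Icc a b ∧
    Set.Icc a' b' ∈ 𝓝[Set.Icc a b] t ∧ eVariationOn c (Set.Icc a' b') = edist (c a') (c b')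

/-- A subset `C` is weakly convex if any two of its points are joined by a geodesic
(not necessarily shortest) entirely contained in `C`. -/
def IsWeaklyConvexSubset (C : Set Y) : Prop :=
  ∀ x ∈ C, ∀ y ∈ C, ∃ (a b : ℝ) (c : ℝ → Y), IsGeodesicCurveOn c a b ∧
    c a = x ∧ c b = y ∧ Set.MapsTo c (Set.Icc a b) C

/-- `f` has local convexity data: for each `x` every sufficiently small neighborhood of `x`
has convex image. -/
def HasLocalConvexityData {X : Type*} [TopologicalSpace X] (f : X → Y) : Prop :=
  ∀ x : X, ∃ V ∈ 𝓝 x, ∀ U ∈ 𝓝 x, U ⊆ V → IsConvexSubset (f '' U)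

/-- The function `d̃` on `X_f`: the infimum over all continuous curves `γ` in `X_f`
joining `p` and `q` of the length of `f̃ ∘ γ`. -/
noncomputable def dTilde {X : Type*} [TopologicalSpace X] (f : X → Y)
    (p q : Quotient (fiberSetoid f)) : ℝ≥0∞ :=
  sInf {L | ∃ (a b : ℝ) (γ : ℝ → Quotient (fiberSetoid f)), a ≤ b ∧
    ContinuousOn γ (Set.Icc a b) ∧ γ a = p ∧ γ b = q ∧
    L = eVariationOn (fun t => ftilde f (γ t)) (Set.Icc a b)}

end MetricDefs

section ProofAux

open scoped ENNReal NNReal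

variable {X Y : Type*} [TopologicalSpace X] [EMetricSpace Y]

/-! ### Basic lemmas about the fiber setoid and `ftilde` -/

theorem relFiber_f_eq {f : X → Y} {x y : X} (h : (fiberSetoid f).r x y) : f y = f x := by
  have := connectedComponentIn_subset (f ⁻¹' {f x}) x h
  simpa using this

theorem continuous_mkq (f : X → Y) : Continuous (Quotient.mk (fiberSetoid f)) :=
  continuous_coinduced_rng

theorem ftilde_continuous (f : X → Y) (hf : Continuous f) : Continuous (ftilde f) := by
  unfold ftilde
  exact hf.quotient_lift _

theorem SatisfiesLFC.mk_eq {f : X → Y} {U : Set X} (hU : SatisfiesLFC f U) {u v : X}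
    (hu : u ∈ U) (hv : v ∈ U) (hfv : f v = f u) :
    Quotient.mk (fiberSetoid f) u = Quotient.mk (fiberSetoid f) v :=
  Quotient.sound (hU u hu v hv hfv)

theorem isOpen_mk_image (f : X → Y) {S : Set X} (hS : IsOpen S)
    (hsat : ∀ z ∈ S, ∀ w, (fiberSetoid f).r z w → w ∈ S) :
    IsOpen (Quotient.mk (fiberSetoid f) '' S) := by
  have hpre : Quotient.mk (fiberSetoid f) ⁻¹' (Quotient.mk (fiberSetoid f) '' S) = S := by
    ext z
    constructor
    · rintro ⟨s, hs, hmk⟩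
      exact hsat s hs z (Quotient.exact hmk)
    · intro hz
      exact ⟨z, hz, rfl⟩
  have h2 : IsOpen (Quotient.mk (fiberSetoid f) ⁻¹' (Quotient.mk (fiberSetoid f) '' S)) := by
    rw [hpre]; exact hS
  exact isOpen_coinduced.mpr h2

/-! ### Good sets -/

/-- A "good" set: open, satisfies (LFC), the image-form of (LOI), and has convex image. -/
def GoodSet (f : X → Y) (U : Set X) : Prop :=
  IsOpen U ∧ SatisfiesLFC f U ∧
    (∀ O : Set X, IsOpen O → ∃ R : Set Y, IsOpen R ∧ f '' (O ∩ U) = R ∩ f '' U) ∧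
    IsConvexSubset (f '' U)

theorem loi_image {f : X → Y} {U : Set X} (hU : SatisfiesLOI f U) {O : Set X} (hO : IsOpen O) :
    ∃ R : Set Y, IsOpen R ∧ f '' (O ∩ U) = R ∩ f '' U := by
  have h1 : IsOpen ((fun u : U => (⟨f u, Set.mem_image_of_mem f u.2⟩ : f '' U)) ''
      ((↑) ⁻¹' O)) := hU _ (hO.preimage continuous_subtype_val)
  rw [isOpen_induced_iff] at h1
  obtain ⟨R, hR, hReq⟩ := h1
  refine ⟨R, hR, ?_⟩
  ext y
  constructor
  · rintro ⟨u, ⟨huO, huU⟩, rfl⟩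
    have h2 : (⟨f u, Set.mem_image_of_mem f huU⟩ : f '' U) ∈ (↑) ⁻¹' R := by
      rw [hReq]
      exact ⟨⟨u, huU⟩, huO, rfl⟩
    exact ⟨h2, Set.mem_image_of_mem f huU⟩
  · rintro ⟨hyR, hyU⟩
    obtain ⟨u, huU, rfl⟩ := hyU
    have h2 : (⟨f u, Set.mem_image_of_mem f huU⟩ : f '' U) ∈ (↑) ⁻¹' R := hyR
    rw [hReq] at h2
    obtain ⟨w, hwO, hweq⟩ := h2
    exact ⟨w, ⟨hwO, w.2⟩, congrArg Subtype.val hweq⟩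

theorem exists_goodSet (f : X → Y) (hLOI : LocallyOpenOntoImage f)
    (hLFC : LocallyFiberConnected f) (hLCD : HasLocalConvexityData f) (x : X) :
    ∃ U : Set X, GoodSet f U ∧ x ∈ U := by
  obtain ⟨U₀, hU₀o, hxU₀, hU₀loi⟩ := hLOI x
  obtain ⟨V, hV, hconv⟩ := hLCD x
  have hxiV : x ∈ interior V := mem_interior_iff_mem_nhds.mpr hV
  obtain ⟨N, hNmem, hNsub, -, hNlfc⟩ := hLFC x (U₀ ∩ interior V)
    (hU₀o.inter isOpen_interior) ⟨hxU₀, hxiV⟩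
  have hNU₀ : interior N ⊆ U₀ := fun z hz => (hNsub (interior_subset hz)).1
  have hNV : interior N ⊆ V := fun z hz => interior_subset ((hNsub (interior_subset hz)).2)
  have hxN : x ∈ interior N := mem_interior_iff_mem_nhds.mpr hNmem
  refine ⟨interior N, ⟨isOpen_interior, ?_, ?_, ?_⟩, hxN⟩
  · exact fun u hu v hv h => hNlfc u (interior_subset hu) v (interior_subset hv) h
  · intro O hO
    obtain ⟨R, hR, hReq⟩ := loi_image hU₀loi (hO.inter isOpen_interior)
    have heq : (O ∩ interior N) ∩ U₀ = O ∩ interior N := by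
      ext z
      exact ⟨fun h => h.1, fun h => ⟨h, hNU₀ h.2⟩⟩
    rw [heq] at hReq
    refine ⟨R, hR, Set.Subset.antisymm ?_ ?_⟩
    · intro y hy
      refine ⟨?_, Set.image_mono Set.inter_subset_right hy⟩
      have : y ∈ R ∩ f '' U₀ := hReq ▸ hy
      exact this.1
    · rintro y ⟨hyR, hyN⟩
      have h1 : y ∈ R ∩ f '' U₀ := ⟨hyR, Set.image_mono hNU₀ hyN⟩
      rw [← hReq] at h1
      exact h1
  · exact hconv (interior N) (isOpen_interior.mem_nhds hxN) hNV

/-! ### Basic lemmas about `dTilde` -/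

theorem edist_le_dTilde (f : X → Y) (hY : IsLengthSpace Y) (hf : Continuous f)
    (p q : Quotient (fiberSetoid f)) :
    edist (ftilde f p) (ftilde f q) ≤ dTilde f p q := by
  refine le_sInf ?_
  rintro L ⟨α, β, γ, hαβ, hγc, hγa, hγb, rfl⟩
  rw [hY]
  exact sInf_le ⟨α, β, fun t => ftilde f (γ t), hαβ,
    (ftilde_continuous f hf).comp_continuousOn hγc, Set.mapsTo_univ _ _,
    by show ftilde f (γ α) = ftilde f p; rw [hγa], by show ftilde f (γ β) = ftilde f q; rw [hγb],
    rfl⟩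

theorem dTilde_le_eVar (f : X → Y) {c : ℝ → Quotient (fiberSetoid f)} {s t : ℝ} (hst : s ≤ t)
    (hc : ContinuousOn c (Set.Icc s t)) :
    dTilde f (c s) (c t) ≤ eVariationOn (fun u => ftilde f (c u)) (Set.Icc s t) :=
  sInf_le ⟨s, t, c, hst, hc, rfl, rfl, rfl⟩

theorem dTilde_self (f : X → Y) (p : Quotient (fiberSetoid f)) : dTilde f p p = 0 := by
  refine le_antisymm ?_ zero_le
  have h1 : dTilde f p p ≤ eVariationOn (fun _ : ℝ => ftilde f p) (Set.Icc (0:ℝ) 0) :=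
    sInf_le ⟨0, 0, fun _ => p, le_rfl, continuousOn_const, rfl, rfl, rfl⟩
  have h2 : eVariationOn (fun _ : ℝ => ftilde f p) (Set.Icc (0:ℝ) 0) = 0 := by
    rw [Set.Icc_self]
    exact eVariationOn.subsingleton _ Set.subsingleton_singleton
  rw [h2] at h1
  exact h1

theorem dTilde_comm (f : X → Y) (p q : Quotient (fiberSetoid f)) :
    dTilde f p q = dTilde f q p := by
  suffices h : ∀ p q : Quotient (fiberSetoid f), dTilde f p q ≤ dTilde f q p from
    le_antisymm (h p q) (h q p)
  intro p q
  refine le_sInf ?_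
  rintro L ⟨α, β, γ, hαβ, hγc, hγa, hγb, rfl⟩
  have hmaps : Set.MapsTo (fun t => α + β - t) (Set.Icc α β) (Set.Icc α β) := by
    intro t ht
    simp only [Set.mem_Icc]
    constructor <;> linarith [ht.1, ht.2]
  have hcont : ContinuousOn (fun t => γ (α + β - t)) (Set.Icc α β) :=
    hγc.comp ((continuous_const.sub continuous_id).continuousOn) hmaps
  have hle : dTilde f p q ≤
      eVariationOn (fun t => ftilde f (γ (α + β - t))) (Set.Icc α β) := by
    refine sInf_le ⟨α, β, fun t => γ (α + β - t), hαβ, hcont, ?_, ?_, rfl⟩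
    · show γ (α + β - α) = p
      rw [show α + β - α = β by ring, hγb]
    · show γ (α + β - β) = q
      rw [show α + β - β = α by ring, hγa]
  refine hle.trans (le_of_eq ?_)
  have hanti : AntitoneOn (fun t : ℝ => α + β - t) (Set.Icc α β) := by
    intro s _ t _ hst
    simp only
    linarith
  have := eVariationOn.comp_eq_of_antitoneOn (fun t => ftilde f (γ t))
    (fun t : ℝ => α + β - t) hanti
  have himg : (fun t : ℝ => α + β - t) '' Set.Icc α β = Set.Icc α β := by
    rw [Set.image_const_sub_Icc]
    congr 1 <;> ring
  rw [himg] at this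
  exact this

/-- Gluing of two curves for the triangle inequality. -/
theorem glue_continuousOn {Z : Type*} [TopologicalSpace Z] {γ₁ γ₂ : ℝ → Z}
    {α₁ β₁ α₂ β₂ : ℝ} (h₁ : ContinuousOn γ₁ (Set.Icc α₁ β₁))
    (h₂ : ContinuousOn γ₂ (Set.Icc α₂ β₂)) (hq : γ₁ β₁ = γ₂ α₂)
    (hαβ₁ : α₁ ≤ β₁) (hαβ₂ : α₂ ≤ β₂) :
    ContinuousOn (fun t => if t ≤ β₁ then γ₁ t else γ₂ (t + α₂ - β₁))
      (Set.Icc α₁ (β₁ + (β₂ - α₂))) := by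
  set c₃ := β₁ + (β₂ - α₂) with hc₃
  set g : ℝ → Z := fun t => if t ≤ β₁ then γ₁ t else γ₂ (t + α₂ - β₁) with hg
  have hsplit : Set.Icc α₁ c₃ = Set.Icc α₁ β₁ ∪ Set.Icc β₁ c₃ :=
    (Set.Icc_union_Icc_eq_Icc hαβ₁ (by rw [hc₃]; linarith)).symm
  have hgeq₂ : ∀ s ∈ Set.Icc β₁ c₃, g s = γ₂ (s + α₂ - β₁) := by
    intro s hs
    rcases eq_or_lt_of_le hs.1 with hsβ | hsβ
    · simp only [hg, ← hsβ, if_pos le_rfl]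
      rw [hq]
      congr 1
      ring
    · simp only [hg, if_neg (not_le.mpr hsβ)]
  have hcomp : ContinuousOn (fun s => γ₂ (s + α₂ - β₁)) (Set.Icc β₁ c₃) := by
    refine h₂.comp ((continuous_id.add continuous_const).sub continuous_const).continuousOn ?_
    intro s hs
    constructor
    · have := hs.1; simp only; linarith
    · have := hs.2; simp only; rw [hc₃] at this; linarith
  intro t ht
  rw [hsplit]
  apply ContinuousWithinAt.union
  · by_cases h : t ∈ Set.Icc α₁ β₁
    · refine (h₁ t h).congr (fun s hs => ?_) ?_
      · simp only [hg, if_pos hs.2]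
      · simp only [hg, if_pos h.2]
    · exact continuousWithinAt_of_notMem_closure (by rwa [isClosed_Icc.closure_eq])
  · by_cases h : t ∈ Set.Icc β₁ c₃
    · exact ((hcomp t h).congr hgeq₂ (hgeq₂ t h))
    · exact continuousWithinAt_of_notMem_closure (by rwa [isClosed_Icc.closure_eq])

theorem dTilde_triangle (f : X → Y) (p q r : Quotient (fiberSetoid f)) :
    dTilde f p r ≤ dTilde f p q + dTilde f q r := by
  refine ENNReal.le_of_forall_pos_le_add fun ε hε htop => ?_
  have hpq : dTilde f p q ≠ ⊤ := fun h => by simp [h] at htop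
  have hqr : dTilde f q r ≠ ⊤ := fun h => by simp [h] at htop
  have hε2 : ((ε : ℝ≥0∞) / 2) ≠ 0 := by
    simp only [ne_eq, ENNReal.div_eq_zero_iff]
    push_neg
    exact ⟨by exact_mod_cast hε.ne', by norm_num⟩
  obtain ⟨L₁, hL₁mem, hL₁lt⟩ := sInf_lt_iff.mp (ENNReal.lt_add_right hpq hε2)
  obtain ⟨L₂, hL₂mem, hL₂lt⟩ := sInf_lt_iff.mp (ENNReal.lt_add_right hqr hε2)
  obtain ⟨α₁, β₁, γ₁, hαβ₁, hγ₁c, hγ₁a, hγ₁b, rfl⟩ := hL₁mem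
  obtain ⟨α₂, β₂, γ₂, hαβ₂, hγ₂c, hγ₂a, hγ₂b, rfl⟩ := hL₂mem
  set c₃ := β₁ + (β₂ - α₂) with hc₃
  set g : ℝ → Quotient (fiberSetoid f) :=
    fun t => if t ≤ β₁ then γ₁ t else γ₂ (t + α₂ - β₁) with hg
  have hgc : ContinuousOn g (Set.Icc α₁ c₃) :=
    glue_continuousOn hγ₁c hγ₂c (by rw [hγ₁b, hγ₂a]) hαβ₁ hαβ₂
  have hga : g α₁ = p := by simp only [hg, if_pos hαβ₁]; exact hγ₁a
  have hgb : g c₃ = r := by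
    by_cases h : c₃ ≤ β₁
    · have h1 : β₂ = α₂ := by rw [hc₃] at h; linarith
      simp only [hg, if_pos h]
      have h2 : c₃ = β₁ := by rw [hc₃, h1]; ring
      rw [h2, hγ₁b, ← hγ₂a, ← h1, hγ₂b]
    · simp only [hg, if_neg h]
      rw [show c₃ + α₂ - β₁ = β₂ by rw [hc₃]; ring, hγ₂b]
  have hkey : dTilde f p r ≤
      eVariationOn (fun t => ftilde f (g t)) (Set.Icc α₁ c₃) :=
    sInf_le ⟨α₁, c₃, g, by rw [hc₃]; linarith, hgc, hga, hgb, rfl⟩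
  have hsum : eVariationOn (fun t => ftilde f (g t)) (Set.Icc α₁ c₃) =
      eVariationOn (fun t => ftilde f (γ₁ t)) (Set.Icc α₁ β₁) +
      eVariationOn (fun t => ftilde f (γ₂ t)) (Set.Icc α₂ β₂) := by
    have hIcc := eVariationOn.Icc_add_Icc (fun t => ftilde f (g t))
      (s := Set.univ) hαβ₁ (show β₁ ≤ c₃ by rw [hc₃]; linarith) (Set.mem_univ β₁)
    simp only [Set.univ_inter] at hIcc
    rw [← hIcc]
    congr 1
    · refine eVariationOn.eq_of_eqOn fun s hs => ?_
      show ftilde f (g s) = ftilde f (γ₁ s)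
      simp only [hg, if_pos hs.2]
    · have h1 : eVariationOn (fun t => ftilde f (g t)) (Set.Icc β₁ c₃) =
          eVariationOn (fun t => ftilde f (γ₂ (t + α₂ - β₁))) (Set.Icc β₁ c₃) := by
        refine eVariationOn.eq_of_eqOn fun s hs => ?_
        show ftilde f (g s) = ftilde f (γ₂ (s + α₂ - β₁))
        have hgs : g s = γ₂ (s + α₂ - β₁) := by
          rcases eq_or_lt_of_le hs.1 with hsβ | hsβ
          · simp only [hg, ← hsβ, if_pos le_rfl]
            rw [hγ₁b, show β₁ + α₂ - β₁ = α₂ by ring, hγ₂a]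
          · simp only [hg, if_neg (not_le.mpr hsβ)]
        rw [hgs]
      rw [h1]
      have hmono : MonotoneOn (fun t : ℝ => t + α₂ - β₁) (Set.Icc β₁ c₃) := by
        intro s _ t _ hst
        simp only
        linarith
      have := eVariationOn.comp_eq_of_monotoneOn (fun t => ftilde f (γ₂ t))
        (fun t : ℝ => t + α₂ - β₁) hmono
      have himg : (fun t : ℝ => t + α₂ - β₁) '' Set.Icc β₁ c₃ = Set.Icc α₂ β₂ := by
        have : (fun t : ℝ => t + α₂ - β₁) = fun t : ℝ => t + (α₂ - β₁) := by
          funext t; ring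
        rw [this, Set.image_add_const_Icc]
        congr 1 <;> linarith
      rw [himg] at this
      exact this
  calc dTilde f p r ≤ _ := hkey
    _ = _ + _ := hsum
    _ ≤ (dTilde f p q + ε / 2) + (dTilde f q r + ε / 2) := add_le_add hL₁lt.le hL₂lt.le
    _ = dTilde f p q + dTilde f q r + ((ε : ℝ≥0∞) / 2 + ε / 2) := by ring
    _ = dTilde f p q + dTilde f q r + ε := by rw [ENNReal.add_halves]

/-! ### Lemmas about `lengthWith` -/

theorem single_le_lengthWith {Z : Type*} (ρ : Z → Z → ℝ≥0∞) (c : ℝ → Z) {s : Set ℝ}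
    {u v : ℝ} (hu : u ∈ s) (hv : v ∈ s) (huv : u ≤ v) :
    ρ (c v) (c u) ≤ lengthWith ρ c s := by
  set w : ℕ → ℝ := fun i => if i = 0 then u else v with hw
  have hmono : Monotone w := by
    intro i j hij
    simp only [hw]
    split_ifs with h1 h2
    · exact le_rfl
    · exact huv
    · omega
    · exact le_rfl
  have hmem : ∀ i, w i ∈ s := by
    intro i
    simp only [hw]
    split_ifs
    · exact hu
    · exact hv
  have h := le_iSup (fun p : ℕ × { w : ℕ → ℝ // Monotone w ∧ ∀ i, w i ∈ s } =>
    ∑ i ∈ Finset.range p.1, ρ (c (p.2.1 (i + 1))) (c (p.2.1 i)))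
    ⟨1, ⟨w, hmono, hmem⟩⟩
  refine le_trans (le_of_eq ?_) h
  rw [Finset.sum_range_one]
  simp only [hw]
  norm_num

theorem lengthWith_add {Z : Type*} (ρ : Z → Z → ℝ≥0∞) (c : ℝ → Z) {a m b : ℝ}
    (ham : a ≤ m) (hmb : m ≤ b) :
    lengthWith ρ c (Set.Icc a m) + lengthWith ρ c (Set.Icc m b) ≤
      lengthWith ρ c (Set.Icc a b) := by
  have hne1 : Nonempty (ℕ × { w : ℕ → ℝ // Monotone w ∧ ∀ i, w i ∈ Set.Icc a m }) :=
    ⟨⟨0, ⟨fun _ => m, monotone_const, fun _ => ⟨ham, le_rfl⟩⟩⟩⟩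
  have hne2 : Nonempty (ℕ × { w : ℕ → ℝ // Monotone w ∧ ∀ i, w i ∈ Set.Icc m b }) :=
    ⟨⟨0, ⟨fun _ => m, monotone_const, fun _ => ⟨le_rfl, hmb⟩⟩⟩⟩
  refine ENNReal.iSup_add_iSup_le ?_
  rintro ⟨n₁, u, hu, humem⟩ ⟨n₂, v, hv, hvmem⟩
  set w : ℕ → ℝ := fun i => if i ≤ n₁ then u i else v (i - (n₁ + 1)) with hw
  have hwval₁ : ∀ i, i ≤ n₁ → w i = u i := by
    intro i hi; simp only [hw, if_pos hi]
  have hwval₂ : ∀ i, n₁ < i → w i = v (i - (n₁ + 1)) := by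
    intro i hi; simp only [hw, if_neg (by omega : ¬ i ≤ n₁)]
  have hwmono : Monotone w := by
    intro i j hij
    rcases le_or_gt i n₁ with hi | hi
    · rcases le_or_gt j n₁ with hj | hj
      · rw [hwval₁ i hi, hwval₁ j hj]; exact hu hij
      · rw [hwval₁ i hi, hwval₂ j hj]
        exact le_trans (humem i).2 (hvmem _).1
    · have hj : n₁ < j := lt_of_lt_of_le hi hij
      rw [hwval₂ i hi, hwval₂ j hj]
      exact hv (by omega)
  have hwmem : ∀ i, w i ∈ Set.Icc a b := by
    intro i
    rcases le_or_gt i n₁ with hi | hi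
    · rw [hwval₁ i hi]; exact ⟨(humem i).1, le_trans (humem i).2 hmb⟩
    · rw [hwval₂ i hi]; exact ⟨le_trans ham (hvmem _).1, (hvmem _).2⟩
  have hle : ∑ i ∈ Finset.range (n₁ + 1 + n₂), ρ (c (w (i + 1))) (c (w i)) ≤
      lengthWith ρ c (Set.Icc a b) :=
    le_iSup (fun p : ℕ × { w : ℕ → ℝ // Monotone w ∧ ∀ i, w i ∈ Set.Icc a b } =>
      ∑ i ∈ Finset.range p.1, ρ (c (p.2.1 (i + 1))) (c (p.2.1 i)))
      ⟨n₁ + 1 + n₂, ⟨w, hwmono, hwmem⟩⟩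
  refine le_trans ?_ hle
  set g : ℕ → ℝ≥0∞ := fun i => ρ (c (w (i + 1))) (c (w i)) with hgdef
  have hsplit : ∑ i ∈ Finset.range (n₁ + 1 + n₂), g i =
      ∑ i ∈ Finset.range n₁, g i + ∑ i ∈ Finset.Ico n₁ (n₁ + 1 + n₂), g i := by
    exact (Finset.sum_range_add_sum_Ico g (by omega)).symm
  have hdrop : ∑ i ∈ Finset.Ico (n₁ + 1) (n₁ + 1 + n₂), g i ≤
      ∑ i ∈ Finset.Ico n₁ (n₁ + 1 + n₂), g i := by
    rw [← Finset.sum_Ico_consecutive g (by omega : n₁ ≤ n₁ + 1) (by omega)]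
    exact le_add_self
  have he₁ : ∑ i ∈ Finset.range n₁, ρ (c (u (i + 1))) (c (u i)) =
      ∑ i ∈ Finset.range n₁, g i := by
    refine Finset.sum_congr rfl fun i hi => ?_
    rw [Finset.mem_range] at hi
    rw [hgdef]
    simp only
    rw [hwval₁ i (by omega), hwval₁ (i + 1) (by omega)]
  have he₂ : ∑ i ∈ Finset.range n₂, ρ (c (v (i + 1))) (c (v i)) =
      ∑ i ∈ Finset.Ico (n₁ + 1) (n₁ + 1 + n₂), g i := by
    rw [Finset.sum_Ico_eq_sum_range]
    have hcount : n₁ + 1 + n₂ - (n₁ + 1) = n₂ := by omega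
    rw [hcount]
    refine Finset.sum_congr rfl fun i _ => ?_
    rw [hgdef]
    simp only
    rw [hwval₂ (n₁ + 1 + i) (by omega), hwval₂ (n₁ + 1 + i + 1) (by omega),
      show n₁ + 1 + i - (n₁ + 1) = i by omega, show n₁ + 1 + i + 1 - (n₁ + 1) = i + 1 by omega]
  rw [he₁, he₂, hsplit]
  exact add_le_add le_rfl hdrop

theorem eVar_le_lengthWith (f : X → Y) (hY : IsLengthSpace Y) (hf : Continuous f)
    (c : ℝ → Quotient (fiberSetoid f)) (s : Set ℝ) :
    eVariationOn (fun t => ftilde f (c t)) s ≤ lengthWith (dTilde f) c s := by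
  refine iSup_le ?_
  rintro ⟨n, u, hu, humem⟩
  refine le_trans (Finset.sum_le_sum fun i _ => edist_le_dTilde f hY hf (c (u (i+1))) (c (u i)))
    (le_iSup (fun p : ℕ × { w : ℕ → ℝ // Monotone w ∧ ∀ i, w i ∈ s } =>
      ∑ i ∈ Finset.range p.1, dTilde f (c (p.2.1 (i + 1))) (c (p.2.1 i))) ⟨n, ⟨u, hu, humem⟩⟩)

/-! ### The local isometry inequality over a good set -/

theorem dTilde_le_of_good (f : X → Y) (hf : Continuous f) {U : Set X} (hU : GoodSet f U)
    {u v : X} (hu : u ∈ U) (hv : v ∈ U) :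
    dTilde f (Quotient.mk (fiberSetoid f) u) (Quotient.mk (fiberSetoid f) v) ≤
      edist (f u) (f v) ∧ edist (f u) (f v) ≠ ⊤ := by
  classical
  obtain ⟨hUo, hlfc, himg, hcvx⟩ := hU
  obtain ⟨hne, heq⟩ := hcvx (f u) ⟨u, hu, rfl⟩ (f v) ⟨v, hv, rfl⟩
  refine ⟨?_, hne⟩
  rw [heq]
  refine le_sInf ?_
  rintro L ⟨α, β, δ, hαβ, hδc, hδm, hδa, hδb, rfl⟩
  set rep : Y → X := fun y => if h : y ∈ f '' U then h.choose else u with hrepdef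
  have hrepU : ∀ y ∈ f '' U, rep y ∈ U ∧ f (rep y) = y := by
    intro y hy
    rw [hrepdef]
    simp only [dif_pos hy]
    exact ⟨hy.choose_spec.1, hy.choose_spec.2⟩
  set γ : ℝ → Quotient (fiberSetoid f) :=
    fun t => Quotient.mk (fiberSetoid f) (rep (δ t)) with hγdef
  have hγcont : ContinuousOn γ (Set.Icc α β) := by
    intro t ht
    have hδt : δ t ∈ f '' U := hδm ht
    rw [ContinuousWithinAt]
    refine (nhds_basis_opens (γ t)).tendsto_right_iff.mpr ?_
    rintro W ⟨hWmem, hWopen⟩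
    have hpre : IsOpen (Quotient.mk (fiberSetoid f) ⁻¹' W) :=
      hWopen.preimage (continuous_mkq f)
    obtain ⟨R, hRopen, hReq⟩ := himg _ hpre
    have h1 : δ t ∈ R := by
      have h2 : δ t ∈ f '' (Quotient.mk (fiberSetoid f) ⁻¹' W ∩ U) :=
        ⟨rep (δ t), ⟨hWmem, (hrepU _ hδt).1⟩, (hrepU _ hδt).2⟩
      rw [hReq] at h2
      exact h2.1
    filter_upwards [hδc t ht (hRopen.mem_nhds h1), self_mem_nhdsWithin] with s hsR hsIcc
    have hδs : δ s ∈ f '' U := hδm hsIcc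
    have h3 : δ s ∈ f '' (Quotient.mk (fiberSetoid f) ⁻¹' W ∩ U) := by
      rw [hReq]
      exact ⟨hsR, hδs⟩
    obtain ⟨w, ⟨hwW, hwU⟩, hwf⟩ := h3
    have h4 : Quotient.mk (fiberSetoid f) w = γ s :=
      SatisfiesLFC.mk_eq hlfc hwU (hrepU _ hδs).1 (by rw [(hrepU _ hδs).2, hwf])
    rw [← h4]
    exact hwW
  have hγa : γ α = Quotient.mk (fiberSetoid f) u := by
    have h := hrepU (δ α) (by rw [hδa]; exact ⟨u, hu, rfl⟩)
    exact (SatisfiesLFC.mk_eq hlfc hu h.1 (by rw [h.2, hδa])).symm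
  have hγb : γ β = Quotient.mk (fiberSetoid f) v := by
    have h := hrepU (δ β) (by rw [hδb]; exact ⟨v, hv, rfl⟩)
    exact (SatisfiesLFC.mk_eq hlfc hv h.1 (by rw [h.2, hδb])).symm
  calc dTilde f (Quotient.mk (fiberSetoid f) u) (Quotient.mk (fiberSetoid f) v) ≤
      eVariationOn (fun t => ftilde f (γ t)) (Set.Icc α β) :=
        sInf_le ⟨α, β, γ, hαβ, hγcont, hγa, hγb, rfl⟩
    _ = eVariationOn δ (Set.Icc α β) :=
        eVariationOn.eq_of_eqOn fun s hs => (hrepU _ (hδm hs)).2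

end ProofAux

section ProofAux2

open scoped ENNReal NNReal

variable {X Y : Type*} [TopologicalSpace X] [EMetricSpace Y]

/-- The key saturation lemma: around any point of a good set `U` there is a saturated
open set all of whose points are related to a point of `U`. -/
theorem exists_sat_open (f : X → Y) [NormalSpace X] [FirstCountableTopology X]
    (hf : Continuous f) (hclosed : IsClosedMap f) (hLFC : LocallyFiberConnected f)
    (hLOI : LocallyOpenOntoImage f) (hLCD : HasLocalConvexityData f)
    {U : Set X} (hU : GoodSet f U) {x : X} (hx : x ∈ U) :
    ∃ S : Set X, IsOpen S ∧ (∀ z ∈ S, ∀ w, (fiberSetoid f).r z w → w ∈ S) ∧ x ∈ S ∧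
      ∀ z ∈ S, ∃ u ∈ U, (fiberSetoid f).r z u := by
  classical
  obtain ⟨hUo, hUlfc, hUimg, hUcvx⟩ := hU
  -- choice of good sets everywhere
  choose Ug hUg hUgmem using fun v : X => exists_goodSet f hLOI hLFC hLCD v
  -- choice of LFC neighborhoods everywhere
  have hAllLFC : ∀ v : X, ∃ W, W ∈ 𝓝 v ∧ SatisfiesLFC f W := by
    intro v
    obtain ⟨W, h1, -, -, h4⟩ := hLFC v Set.univ isOpen_univ (Set.mem_univ v)
    exact ⟨W, h1, h4⟩
  choose Wn hWn hWlfc using hAllLFC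
  set y := f x with hydef
  set F := f ⁻¹' {y} with hFdef
  have hxF : x ∈ F := rfl
  have hFclosed : IsClosed F := isClosed_singleton.preimage hf
  set K := connectedComponentIn F x with hKdef
  have hxK : x ∈ K := mem_connectedComponentIn hxF
  have hKF : K ⊆ F := connectedComponentIn_subset F x
  have hKclosed : IsClosed K := by
    rw [hKdef, connectedComponentIn_eq_image hxF]
    exact hFclosed.isClosedEmbedding_subtypeVal.isClosedMap _ isClosed_connectedComponent
  have hfiberopen : ∀ u ∈ F, ∀ z ∈ F, z ∈ Wn u → z ∈ connectedComponentIn F u := by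
    intro u hu z hz hzW
    have hfz : f z = f u := by
      have h1 : f z = y := hz
      have h2 : f u = y := hu
      rw [h1, h2]
    have h := hWlfc u u (mem_of_mem_nhds (hWn u)) z hzW hfz
    rwa [show f u = y from hu] at h
  have hKopenin : ∀ v ∈ K, ∀ z ∈ F, z ∈ Wn v → z ∈ K := by
    intro v hv z hz hzW
    have h := hfiberopen v (hKF hv) z hz hzW
    rw [hKdef, connectedComponentIn_eq hv]
    exact h
  set O : Set X := ⋃ v ∈ K, interior (Wn v) with hOdef
  have hKO : K = F ∩ O := by
    apply Set.Subset.antisymm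
    · intro v hv
      refine ⟨hKF hv, ?_⟩
      rw [hOdef]
      exact Set.mem_biUnion hv (mem_interior_iff_mem_nhds.mpr (hWn v))
    · rintro z ⟨hzF, hzO⟩
      rw [hOdef] at hzO
      simp only [Set.mem_iUnion] at hzO
      obtain ⟨v, hvK, hz⟩ := hzO
      exact hKopenin v hvK z hzF (interior_subset hz)
  have hFKclosed : IsClosed (F \ K) := by
    have heq : F \ K = F ∩ Oᶜ := by
      rw [hKO]
      ext z
      simp only [Set.mem_diff, Set.mem_inter_iff, Set.mem_compl_iff]
      tauto
    rw [heq]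
    exact hFclosed.inter (isOpen_biUnion fun v _ => isOpen_interior).isClosed_compl
  obtain ⟨G, H, hGo, hHo, hKG, hFKH, hGH⟩ :=
    normal_separation hKclosed hFKclosed disjoint_sdiff_self_right
  set N : Set Y := (f '' (G ∪ H)ᶜ)ᶜ with hNdef
  have hNo : IsOpen N := (hclosed _ (hGo.union hHo).isClosed_compl).isOpen_compl
  have hyN : y ∈ N := by
    rintro ⟨w, hw, hwy⟩
    have hwF : w ∈ F := by
      simp only [hFdef, Set.mem_preimage, Set.mem_singleton_iff]
      exact hwy
    rcases em (w ∈ K) with h | h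
    · exact hw (Or.inl (hKG h))
    · exact hw (Or.inr (hFKH ⟨hwF, h⟩))
  have hpreN : f ⁻¹' N ⊆ G ∪ H := by
    intro z hz
    by_contra h
    exact hz ⟨z, h, rfl⟩
  have hclassG : ∀ z ∈ G ∩ f ⁻¹' N, ∀ w, (fiberSetoid f).r z w → w ∈ G ∩ f ⁻¹' N := by
    rintro z ⟨hzG, hzN⟩ w hr
    have hsubN : connectedComponentIn (f ⁻¹' {f z}) z ⊆ f ⁻¹' N := by
      intro p hp
      have h1 : f p = f z := by
        have := connectedComponentIn_subset (f ⁻¹' {f z}) z hp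
        simpa using this
      show f p ∈ N
      rw [h1]
      exact hzN
    have hsubG : connectedComponentIn (f ⁻¹' {f z}) z ⊆ G :=
      IsPreconnected.subset_left_of_subset_union hGo hHo hGH (hsubN.trans hpreN)
        ⟨z, mem_connectedComponentIn rfl, hzG⟩ isPreconnected_connectedComponentIn
    exact ⟨hsubG hr, hsubN hr⟩
  set S₀ : Set X := G ∩ f ⁻¹' N with hS₀def
  have hxS₀ : x ∈ S₀ := ⟨hKG hxK, hyN⟩
  set satU : Set X := {z | ∃ u ∈ U, (fiberSetoid f).r z u} with hsatUdef
  set Z : Set X := S₀ \ satU with hZdef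
  have hclZ : closure Z ∩ F = ∅ := by
    by_contra hne
    obtain ⟨w, hwcl, hwF⟩ := Set.nonempty_iff_ne_empty.mpr hne
    have hZG : Z ⊆ G := fun z hz => hz.1.1
    have hwclG : w ∈ closure G := closure_mono hZG hwcl
    have hwK : w ∈ K := by
      rcases em (w ∈ K) with h | h
      · exact h
      · have hwH : w ∈ H := hFKH ⟨hwF, h⟩
        exact absurd hwH (Set.disjoint_left.mp (hGH.closure_left hHo) hwclG)
    obtain ⟨z, hzZ, hzlim⟩ := mem_closure_iff_seq_limit.mp hwcl
    set Cls : ℕ → Set X := fun j => connectedComponentIn (f ⁻¹' {f (z j)}) (z j) with hClsdef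
    have hzmem : ∀ j, z j ∈ Cls j := fun j => mem_connectedComponentIn rfl
    set Lim : Set X := K ∩ ⋂ m : ℕ, closure (⋃ j, ⋃ (_ : m ≤ j), Cls j) with hLimdef
    have hwLim : w ∈ Lim := by
      refine ⟨hwK, Set.mem_iInter.mpr fun m => ?_⟩
      apply mem_closure_of_tendsto (hzlim.comp (Filter.tendsto_add_atTop_nat m))
      refine Filter.Eventually.of_forall fun n => ?_
      simp only [Set.mem_iUnion]
      exact ⟨n + m, le_add_self, hzmem _⟩
    have hkey : ∀ v ∈ Lim, ∀ v' ∈ K ∩ Ug v, v' ∈ Lim := by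
      rintro v hv v' ⟨hv'K, hv'U⟩
      refine ⟨hv'K, Set.mem_iInter.mpr fun m => ?_⟩
      rw [mem_closure_iff]
      intro Q hQo hv'Q
      obtain ⟨hUgo, hUglfc, hUgimg, -⟩ := hUg v
      obtain ⟨R, hRo, hReq⟩ := hUgimg Q hQo
      have hfv' : f v' ∈ R := by
        have h1 : f v' ∈ f '' (Q ∩ Ug v) := ⟨v', ⟨hv'Q, hv'U⟩, rfl⟩
        rw [hReq] at h1
        exact h1.1
      have hfv : f v = f v' := by
        have h1 : f v = y := hKF hv.1
        have h2 : f v' = y := hKF hv'K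
        rw [h1, h2]
      have hvP : v ∈ Ug v ∩ f ⁻¹' R := ⟨hUgmem v, by rw [Set.mem_preimage, hfv]; exact hfv'⟩
      have hPo : IsOpen (Ug v ∩ f ⁻¹' R) := hUgo.inter (hRo.preimage hf)
      have hvcl := Set.mem_iInter.mp hv.2 m
      obtain ⟨w', hw'P, hw'mem⟩ := mem_closure_iff.mp hvcl _ hPo hvP
      simp only [Set.mem_iUnion] at hw'mem
      obtain ⟨j, hjm, hw'C⟩ := hw'mem
      have h2 : f w' ∈ f '' (Q ∩ Ug v) := by
        rw [hReq]
        exact ⟨hw'P.2, ⟨w', hw'P.1, rfl⟩⟩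
      obtain ⟨q, ⟨hqQ, hqU⟩, hqf⟩ := h2
      have hq : q ∈ Cls j := by
        have h1 : q ∈ connectedComponentIn (f ⁻¹' {f w'}) w' := hUglfc w' hw'P.1 q hqU hqf
        have h2 : f w' = f (z j) := by
          have := connectedComponentIn_subset (f ⁻¹' {f (z j)}) (z j) hw'C
          simpa using this
        rw [h2] at h1
        have h3 : connectedComponentIn (f ⁻¹' {f (z j)}) (z j) =
            connectedComponentIn (f ⁻¹' {f (z j)}) w' := connectedComponentIn_eq hw'C
        rw [hClsdef]
        simp only
        rw [h3]
        exact h1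
      refine ⟨q, hqQ, ?_⟩
      simp only [Set.mem_iUnion]
      exact ⟨j, hjm, hq⟩
    have hKLim : K ⊆ Lim := by
      set OL : Set X := ⋃ v ∈ Lim, Ug v with hOLdef
      set OC : Set X := (⋂ m : ℕ, closure (⋃ j, ⋃ (_ : m ≤ j), Cls j))ᶜ with hOCdef
      have hOLo : IsOpen OL := isOpen_biUnion fun v _ => (hUg v).1
      have hOCo : IsOpen OC := (isClosed_iInter fun m => isClosed_closure).isOpen_compl
      have hsub : K ⊆ OL ∪ OC := by
        intro v hv
        by_cases h : v ∈ ⋂ m : ℕ, closure (⋃ j, ⋃ (_ : m ≤ j), Cls j)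
        · exact Or.inl (Set.mem_biUnion ⟨hv, h⟩ (hUgmem v))
        · exact Or.inr h
      have hinter : ∀ v ∈ K ∩ OL, v ∈ Lim := by
        rintro v ⟨hvK, hvOL⟩
        rw [hOLdef] at hvOL
        simp only [Set.mem_iUnion] at hvOL
        obtain ⟨v₀, hv₀, hvU⟩ := hvOL
        exact hkey v₀ hv₀ v ⟨hvK, hvU⟩
      by_contra hnot
      rw [Set.not_subset] at hnot
      obtain ⟨v₁, hv₁K, hv₁⟩ := hnot
      have hv₁OC : v₁ ∈ OC := by
        rw [hOCdef]
        simp only [Set.mem_compl_iff]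
        exact fun h => hv₁ ⟨hv₁K, h⟩
      obtain ⟨p, hpK, hpOL, hpOC⟩ :=
        isPreconnected_connectedComponentIn OL OC hOLo hOCo hsub
          ⟨w, hwK, Set.mem_biUnion hwLim (hUgmem w)⟩ ⟨v₁, hv₁K, hv₁OC⟩
      exact hpOC ((hinter p ⟨hpK, hpOL⟩).2)
    have hxLim := hKLim hxK
    have hxcl := Set.mem_iInter.mp hxLim.2 0
    obtain ⟨q, hqU, hqC⟩ := mem_closure_iff.mp hxcl U hUo hx
    simp only [Set.mem_iUnion] at hqC
    obtain ⟨j, -, hqCj⟩ := hqC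
    exact (hzZ j).2 ⟨q, hqU, hqCj⟩
  set S : Set X := S₀ ∩ f ⁻¹' (f '' closure Z)ᶜ with hSdef
  refine ⟨S, ?_, ?_, ?_, ?_⟩
  · exact (hGo.inter (hNo.preimage hf)).inter
      (((hclosed _ isClosed_closure).isOpen_compl).preimage hf)
  · rintro z ⟨hz₀, hzC⟩ w hr
    refine ⟨hclassG z hz₀ w hr, ?_⟩
    show f w ∈ (f '' closure Z)ᶜ
    rw [relFiber_f_eq hr]
    exact hzC
  · refine ⟨hxS₀, ?_⟩
    show f x ∈ (f '' closure Z)ᶜ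
    rintro ⟨w, hwcl, hwy⟩
    have hwF : w ∈ F := by
      simp only [hFdef, Set.mem_preimage, Set.mem_singleton_iff]
      exact hwy
    have : w ∈ closure Z ∩ F := ⟨hwcl, hwF⟩
    rw [hclZ] at this
    exact this
  · rintro z ⟨hz₀, hzC⟩
    by_contra h
    push_neg at h
    have hzZ : z ∈ Z := ⟨hz₀, fun ⟨u, hu, hr⟩ => h u hu hr⟩
    exact hzC (Set.mem_image_of_mem f (subset_closure hzZ))

end ProofAux2

/-- if `c` is a shortest path in `(X_f, d̃)`, then `f̃ ∘ c` is a geodesic in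
`(Y,d)` contained in `f(X)`. -/
theorem stmt_10 {X Y : Type*} [TopologicalSpace X] [EMetricSpace Y]
    [NormalSpace X] [FirstCountableTopology X] [PathConnectedSpace X] [T2Space X]
    [CompleteSpace Y] [LocallyCompactSpace Y] (hY : IsLengthSpace Y)
    (f : X → Y) (hf : Continuous f) (hclosed : IsClosedMap f)
    (hLOI : LocallyOpenOntoImage f) (hLFC : LocallyFiberConnected f)
    (hLCD : HasLocalConvexityData f)
    (a b : ℝ) (hab : a ≤ b) (c : ℝ → Quotient (fiberSetoid f))
    (hc : ContinuousOn c (Set.Icc a b))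
    (hshortest : lengthWith (dTilde f) c (Set.Icc a b) = dTilde f (c a) (c b)) :
    IsGeodesicCurveOn (fun t => ftilde f (c t)) a b ∧
    ∀ t ∈ Set.Icc a b, ftilde f (c t) ∈ Set.range f := by
    classical
  have hftc : Continuous (ftilde f) := ftilde_continuous f hf
  have hrange : ∀ t ∈ Set.Icc a b, ftilde f (c t) ∈ Set.range f := by
    intro t _
    obtain ⟨xt, hxt⟩ := Quotient.exists_rep (c t)
    exact ⟨xt, by rw [← hxt]; rfl⟩
  refine ⟨⟨hab, hftc.comp_continuousOn hc, ?_⟩, hrange⟩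
  -- a nonempty-interval neighborhood lemma used twice
  have hnbhd : ∀ t₀ ∈ Set.Icc a b, ∀ 𝒲 : Set (Quotient (fiberSetoid f)), IsOpen 𝒲 →
      c t₀ ∈ 𝒲 → ∃ ε : ℝ, 0 < ε ∧ ∀ s ∈ Metric.ball t₀ ε ∩ Set.Icc a b, c s ∈ 𝒲 := by
    intro t₀ ht₀ 𝒲 h𝒲o h𝒲mem
    have hpre : c ⁻¹' 𝒲 ∈ 𝓝[Set.Icc a b] t₀ := hc t₀ ht₀ (h𝒲o.mem_nhds h𝒲mem)
    obtain ⟨O, hOo, ht₀O, hOsub⟩ := mem_nhdsWithin.mp hpre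
    obtain ⟨ε, hε, hball⟩ := Metric.isOpen_iff.mp hOo t₀ ht₀O
    exact ⟨ε, hε, fun s hs => hOsub ⟨hball hs.1, hs.2⟩⟩
  -- global finiteness of d̃ along the curve
  have hDfin : dTilde f (c a) (c b) ≠ ⊤ := by
    have hcover : ∀ t ∈ Set.Icc a b, ∃ ε : ℝ, 0 < ε ∧
        ∀ s ∈ Metric.ball t ε ∩ Set.Icc a b, ∀ s' ∈ Metric.ball t ε ∩ Set.Icc a b,
          dTilde f (c s) (c s') ≠ ⊤ := by
      intro t ht
      obtain ⟨xt, hxt⟩ := Quotient.exists_rep (c t)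
      obtain ⟨Ut, hUt, hxtU⟩ := exists_goodSet f hLOI hLFC hLCD xt
      obtain ⟨St, hSto, hStsat, hxtS, hStU⟩ :=
        exists_sat_open f hf hclosed hLFC hLOI hLCD hUt hxtU
      obtain ⟨ε, hε, hprop⟩ := hnbhd t ht (Quotient.mk (fiberSetoid f) '' St)
        (isOpen_mk_image f hSto hStsat) ⟨xt, hxtS, hxt⟩
      refine ⟨ε, hε, ?_⟩
      intro s hs s' hs'
      obtain ⟨zs, hzsS, hzs⟩ := hprop s hs
      obtain ⟨zs', hzs'S, hzs'⟩ := hprop s' hs'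
      obtain ⟨us, husU, husr⟩ := hStU zs hzsS
      obtain ⟨us', hus'U, hus'r⟩ := hStU zs' hzs'S
      have h1 : c s = Quotient.mk (fiberSetoid f) us := by
        rw [← hzs]; exact Quotient.sound husr
      have h2 : c s' = Quotient.mk (fiberSetoid f) us' := by
        rw [← hzs']; exact Quotient.sound hus'r
      rw [h1, h2]
      obtain ⟨hle, hne⟩ := dTilde_le_of_good f hf hUt husU hus'U
      exact ne_top_of_le_ne_top hne hle
    choose! εf hεf hprop using hcover
    have hcov2 : Set.Icc a b ⊆ ⋃ i : ↥(Set.Icc a b), Metric.ball (i : ℝ) (εf i) := by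
      intro s hs
      exact Set.mem_iUnion.mpr ⟨⟨s, hs⟩, Metric.mem_ball_self (hεf s hs)⟩
    obtain ⟨δ, hδ, hleb⟩ := lebesgue_number_lemma_of_metric isCompact_Icc
      (fun i : ↥(Set.Icc a b) => Metric.isOpen_ball) hcov2
    have hstep : ∀ s s' : ℝ, s ∈ Set.Icc a b → s' ∈ Set.Icc a b → |s' - s| < δ →
        dTilde f (c s) (c s') ≠ ⊤ := by
      intro s s' hs hs' hd
      obtain ⟨i, hi⟩ := hleb s hs
      have h1 : s ∈ Metric.ball (i : ℝ) (εf i) := hi (Metric.mem_ball_self hδ)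
      have h2 : s' ∈ Metric.ball (i : ℝ) (εf i) := by
        apply hi
        rw [Metric.mem_ball, Real.dist_eq]
        exact hd
      exact hprop i i.2 s ⟨h1, hs⟩ s' ⟨h2, hs'⟩
    have hind : ∀ j : ℕ, dTilde f (c a) (c (min b (a + j * (δ / 2)))) ≠ ⊤ := by
      intro j
      induction j with
      | zero =>
        have hmin : min b (a + (0 : ℕ) * (δ / 2)) = a := by
          push_cast
          rw [zero_mul, add_zero, min_eq_right hab]
        rw [hmin, dTilde_self]
        exact ENNReal.zero_ne_top
      | succ j ih =>
        have hδ2 : (0 : ℝ) < δ / 2 := by linarith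
        set s := min b (a + (j : ℕ) * (δ / 2)) with hsdef
        set s' := min b (a + ((j : ℕ) + 1 : ℕ) * (δ / 2)) with hs'def
        have hsI : s ∈ Set.Icc a b := by
          constructor
          · apply le_min hab
            have : (0:ℝ) ≤ (j : ℝ) * (δ / 2) := by positivity
            linarith
          · exact min_le_left _ _
        have hs'I : s' ∈ Set.Icc a b := by
          constructor
          · apply le_min hab
            have : (0:ℝ) ≤ ((j : ℕ) + 1 : ℕ) * (δ / 2) := by positivity
            linarith
          · exact min_le_left _ _
        have hcast : (((j : ℕ) + 1 : ℕ) : ℝ) * (δ / 2) = (j : ℝ) * (δ / 2) + δ / 2 := by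
          push_cast
          ring
        have hss' : s ≤ s' := by
          apply min_le_min le_rfl
          rw [hcast]
          linarith
        have hupper : s' - s ≤ δ / 2 := by
          rcases le_total b (a + (j : ℝ) * (δ / 2)) with hb1 | hb1
          · have he1 : s = b := by rw [hsdef]; exact min_eq_left hb1
            have he2 : s' = b := by
              rw [hs'def]
              apply min_eq_left
              rw [hcast]
              linarith
            rw [he1, he2]
            linarith
          · have he1 : s = a + (j : ℝ) * (δ / 2) := by rw [hsdef]; exact min_eq_right hb1
            have he2 : s' ≤ a + (j : ℝ) * (δ / 2) + δ / 2 := by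
              refine le_trans (min_le_right _ _) ?_
              rw [hcast]
              linarith
            rw [he1]
            linarith
        have hdist : |s' - s| < δ := by
          rw [abs_of_nonneg (by linarith)]
          linarith
        have hlast := hstep s s' hsI hs'I hdist
        have htri := dTilde_triangle f (c a) (c s) (c s')
        exact ne_top_of_le_ne_top (ENNReal.add_ne_top.mpr ⟨ih, hlast⟩) htri
    obtain ⟨n, hn⟩ := exists_nat_gt ((b - a) / (δ / 2))
    have hδ2 : (0 : ℝ) < δ / 2 := by linarith
    have hj : b ≤ a + (n : ℝ) * (δ / 2) := by
      rw [div_lt_iff₀ hδ2] at hn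
      linarith
    have := hind n
    rwa [min_eq_left hj] at this
  -- the local geodesic property
  intro t₀ ht₀
  obtain ⟨x, hxrep⟩ := Quotient.exists_rep (c t₀)
  obtain ⟨U, hUgood, hxU⟩ := exists_goodSet f hLOI hLFC hLCD x
  obtain ⟨S, hSo, hSsat, hxS, hSU⟩ := exists_sat_open f hf hclosed hLFC hLOI hLCD hUgood hxU
  obtain ⟨ε, hε, hprop⟩ := hnbhd t₀ ht₀ (Quotient.mk (fiberSetoid f) '' S)
    (isOpen_mk_image f hSo hSsat) ⟨x, hxS, hxrep⟩
  set a' := max a (t₀ - ε / 2) with ha'def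
  set b' := min b (t₀ + ε / 2) with hb'def
  have haa' : a ≤ a' := le_max_left _ _
  have ha't : a' ≤ t₀ := max_le ht₀.1 (by linarith)
  have htb' : t₀ ≤ b' := le_min ht₀.2 (by linarith)
  have hb'b : b' ≤ b := min_le_left _ _
  have ha'b' : a' ≤ b' := ha't.trans htb'
  have hIccsub : Set.Icc a' b' ⊆ Set.Icc a b := Set.Icc_subset_Icc haa' hb'b
  have hmemnb : Set.Icc a' b' ∈ 𝓝[Set.Icc a b] t₀ := by
    refine mem_nhdsWithin.mpr ⟨Set.Ioo (t₀ - ε / 2) (t₀ + ε / 2), isOpen_Ioo,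
      ⟨by linarith, by linarith⟩, ?_⟩
    rintro s ⟨⟨hs1, hs2⟩, hsab⟩
    exact ⟨max_le hsab.1 hs1.le, le_min hsab.2 hs2.le⟩
  have ha'ball : a' ∈ Metric.ball t₀ ε ∩ Set.Icc a b := by
    constructor
    · rw [Metric.mem_ball, Real.dist_eq]
      have h1 : t₀ - ε / 2 ≤ a' := le_max_right _ _
      rw [abs_sub_lt_iff]
      constructor <;> linarith
    · exact ⟨haa', ha't.trans ht₀.2⟩
  have hb'ball : b' ∈ Metric.ball t₀ ε ∩ Set.Icc a b := by
    constructor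
    · rw [Metric.mem_ball, Real.dist_eq]
      have h1 : b' ≤ t₀ + ε / 2 := min_le_right _ _
      rw [abs_sub_lt_iff]
      constructor <;> linarith
    · exact ⟨ht₀.1.trans htb', hb'b⟩
  obtain ⟨za, hzaS, hza⟩ := hprop a' ha'ball
  obtain ⟨zb, hzbS, hzb⟩ := hprop b' hb'ball
  obtain ⟨u', hu'U, hu'r⟩ := hSU za hzaS
  obtain ⟨v', hv'U, hv'r⟩ := hSU zb hzbS
  have hca' : c a' = Quotient.mk (fiberSetoid f) u' := by
    rw [← hza]; exact Quotient.sound hu'r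
  have hcb' : c b' = Quotient.mk (fiberSetoid f) v' := by
    rw [← hzb]; exact Quotient.sound hv'r
  obtain ⟨hloc, hlocne⟩ := dTilde_le_of_good f hf hUgood hu'U hv'U
  have hge := edist_le_dTilde f hY hf (Quotient.mk (fiberSetoid f) u')
    (Quotient.mk (fiberSetoid f) v')
  have hDe : dTilde f (c a') (c b') = edist (ftilde f (c a')) (ftilde f (c b')) := by
    rw [hca', hcb']
    exact le_antisymm hloc hge
  -- subcurve shortest
  set A := dTilde f (c a) (c a') with hAdef
  set B := dTilde f (c b') (c b) with hBdef
  set L' := lengthWith (dTilde f) c (Set.Icc a' b') with hL'def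
  have h1 : A + L' + B ≤ lengthWith (dTilde f) c (Set.Icc a b) := by
    have s1 := lengthWith_add (dTilde f) c haa' ha'b'
    have s2 := lengthWith_add (dTilde f) c (haa'.trans ha'b') hb'b
    have l1 : A ≤ lengthWith (dTilde f) c (Set.Icc a a') := by
      have h := single_le_lengthWith (dTilde f) c (Set.left_mem_Icc.mpr haa')
        (Set.right_mem_Icc.mpr haa') haa'
      rwa [dTilde_comm] at h
    have l2 : B ≤ lengthWith (dTilde f) c (Set.Icc b' b) := by
      have h := single_le_lengthWith (dTilde f) c (Set.left_mem_Icc.mpr hb'b)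
        (Set.right_mem_Icc.mpr hb'b) hb'b
      rwa [dTilde_comm] at h
    calc A + L' + B ≤ lengthWith (dTilde f) c (Set.Icc a a') + L' +
          lengthWith (dTilde f) c (Set.Icc b' b) := add_le_add (add_le_add l1 le_rfl) l2
      _ ≤ lengthWith (dTilde f) c (Set.Icc a b') + lengthWith (dTilde f) c (Set.Icc b' b) :=
          add_le_add_left s1 _
      _ ≤ lengthWith (dTilde f) c (Set.Icc a b) := s2
  have h2 : dTilde f (c a) (c b) ≤ A + dTilde f (c a') (c b') + B := by
    calc dTilde f (c a) (c b) ≤ dTilde f (c a) (c a') + dTilde f (c a') (c b) :=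
        dTilde_triangle f _ _ _
      _ ≤ dTilde f (c a) (c a') + (dTilde f (c a') (c b') + dTilde f (c b') (c b)) :=
        add_le_add_right (dTilde_triangle f _ _ _) _
      _ = A + dTilde f (c a') (c b') + B := by rw [← hAdef, ← hBdef, add_assoc]
  have hAfin : A ≠ ⊤ := by
    refine ne_top_of_le_ne_top hDfin ?_
    calc A ≤ A + L' + B := le_self_add.trans le_self_add
      _ ≤ _ := h1
      _ = dTilde f (c a) (c b) := hshortest
  have hBfin : B ≠ ⊤ := by
    refine ne_top_of_le_ne_top hDfin ?_
    calc B ≤ A + L' + B := le_add_self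
      _ ≤ _ := h1
      _ = dTilde f (c a) (c b) := hshortest
  have hsubshort : L' ≤ dTilde f (c a') (c b') := by
    have hh : A + (L' + B) ≤ A + (dTilde f (c a') (c b') + B) := by
      rw [← add_assoc, ← add_assoc]
      calc A + L' + B ≤ lengthWith (dTilde f) c (Set.Icc a b) := h1
        _ = dTilde f (c a) (c b) := hshortest
        _ ≤ A + dTilde f (c a') (c b') + B := h2
    have h3 := (ENNReal.add_le_add_iff_left hAfin).mp hh
    exact (ENNReal.add_le_add_iff_right hBfin).mp h3
  refine ⟨a', b', ha'b', ⟨ha't, htb'⟩, hIccsub, hmemnb, ?_⟩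
  have hE_le : eVariationOn (fun t => ftilde f (c t)) (Set.Icc a' b') ≤ L' :=
    eVar_le_lengthWith f hY hf c _
  have he_le : edist (ftilde f (c a')) (ftilde f (c b')) ≤
      eVariationOn (fun t => ftilde f (c t)) (Set.Icc a' b') :=
    eVariationOn.edist_le _ (Set.left_mem_Icc.mpr ha'b') (Set.right_mem_Icc.mpr ha'b')
  exact le_antisymm (hE_le.trans (hsubshort.trans (le_of_eq hDe))) he_le
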